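/- Let (M_n) and (m_n) be real sequences with M_n subadditive (M_{n+k} ≤ M_n + M_k), m_n superadditive (m_{n+k} ≥ m_n + m_k), m_n ≤ M_n, and M_n − m_n ≤ C for a constant C independent of n. Then lim M_n/n = inf_n M_n/n and lim m_n/n = sup_n m_n/n exist and are equal to a common value ℓ, and |M_n − nℓ| ≤ C and |m_n − nℓ| ≤ C for all n. -/

import Mathlib

/-!
Iterating the two inequalities gives `n * m j ≤ m (n * j) ≤ M (n * j) ≤ j * M n`, so every
`m j / j` lies below every `M n / n`. Hence `ℓ := inf_n M n / n` satisfies `m n ≤ n ℓ ≤ M n`,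
and the gap bound `M n - m n ≤ C` turns this into `|M n - n ℓ| ≤ C` and `|m n - n ℓ| ≤ C`.
Dividing by `n` gives both limits, and the limit of `m n / n` from below is its supremum.
-/

open Filter Topology

lemma apply_mul_le_of_subadditive {u : ℕ → ℝ}
    (hu : ∀ n k : ℕ, 1 ≤ n → 1 ≤ k → u (n + k) ≤ u n + u k) {n k : ℕ} (hn : 1 ≤ n) (hk : 1 ≤ k) :
    u (k * n) ≤ k * u n := by
  induction k, hk using Nat.le_induction with
  | base => simp
  | succ k hk ih =>
    have hkn : 1 ≤ k * n := Nat.one_le_iff_ne_zero.2 (by positivity)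
    calc u ((k + 1) * n) = u (k * n + n) := by rw [add_one_mul]
      _ ≤ u (k * n) + u n := hu _ _ hkn hn
      _ ≤ (k + 1 : ℕ) * u n := by push_cast; linarith

lemma superadditive_div_le_subadditive_div {M m : ℕ → ℝ}
    (hsub : ∀ n k : ℕ, 1 ≤ n → 1 ≤ k → M (n + k) ≤ M n + M k)
    (hsup : ∀ n k : ℕ, 1 ≤ n → 1 ≤ k → m n + m k ≤ m (n + k))
    (hle : ∀ n : ℕ, 1 ≤ n → m n ≤ M n) {j n : ℕ} (hj : 1 ≤ j) (hn : 1 ≤ n) :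
    m j / j ≤ M n / n := by
  have hm : -m (n * j) ≤ n * -m j :=
    apply_mul_le_of_subadditive (u := fun k => -m k)
      (fun a b ha hb => by linarith [hsup a b ha hb]) hj hn
  have hM : M (j * n) ≤ j * M n := apply_mul_le_of_subadditive hsub hn hj
  have hmM : m (n * j) ≤ M (n * j) := hle _ (Nat.one_le_iff_ne_zero.2 (by positivity))
  rw [mul_comm j n] at hM
  rw [div_le_div_iff₀ (by positivity) (by positivity)]
  linarith

lemma tendsto_div_of_abs_sub_mul_le {u : ℕ → ℝ} {ℓ C : ℝ}
    (hu : ∀ n : ℕ, 1 ≤ n → |u n - n * ℓ| ≤ C) :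
    Tendsto (fun n : ℕ => u n / n) atTop (𝓝 ℓ) := by
  rw [tendsto_iff_norm_sub_tendsto_zero]
  refine squeeze_zero' (Eventually.of_forall fun _ => norm_nonneg _) ?_
    (tendsto_const_div_atTop_nhds_zero_nat C)
  filter_upwards [eventually_ge_atTop 1] with n hn
  rw [Real.norm_eq_abs, show u n / n - ℓ = (u n - n * ℓ) / n by field_simp, abs_div,
    Nat.abs_cast]
  exact div_le_div_of_nonneg_right (hu n hn) n.cast_nonneg

lemma eq_ciSup_of_tendsto_of_le {u : ℕ → ℝ} {ℓ : ℝ} (hu : Tendsto u atTop (𝓝 ℓ))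
    (hle : ∀ n : ℕ, 1 ≤ n → u n ≤ ℓ) : ℓ = ⨆ n : {n : ℕ // 1 ≤ n}, u n := by
  have : Nonempty {n : ℕ // 1 ≤ n} := ⟨⟨1, le_rfl⟩⟩
  refine (ciSup_eq_of_forall_le_of_forall_lt_exists_gt
    (fun n : {n : ℕ // 1 ≤ n} => hle n n.2) fun w hw => ?_).symm
  obtain ⟨n, hn⟩ := ((hu.eventually_const_lt hw).and (eventually_ge_atTop 1)).exists
  exact ⟨⟨n, hn.2⟩, hn.1⟩

theorem subadd_superadd_common_limit_general
    (M m : ℕ → ℝ) (C : ℝ)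
    (hsub : ∀ n k : ℕ, 1 ≤ n → 1 ≤ k → M (n + k) ≤ M n + M k)
    (hsup : ∀ n k : ℕ, 1 ≤ n → 1 ≤ k → m n + m k ≤ m (n + k))
    (hle : ∀ n : ℕ, 1 ≤ n → m n ≤ M n)
    (hgap : ∀ n : ℕ, 1 ≤ n → M n - m n ≤ C) :
    ∃ ℓ : ℝ,
      Tendsto (fun n : ℕ => M n / n) atTop (𝓝 ℓ) ∧
      Tendsto (fun n : ℕ => m n / n) atTop (𝓝 ℓ) ∧
      ℓ = ⨅ n : {n : ℕ // 1 ≤ n}, M n / n ∧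
      ℓ = ⨆ n : {n : ℕ // 1 ≤ n}, m n / n ∧
      (∀ n : ℕ, 1 ≤ n → |M n - n * ℓ| ≤ C) ∧
      (∀ n : ℕ, 1 ≤ n → |m n - n * ℓ| ≤ C) := by
  have : Nonempty {n : ℕ // 1 ≤ n} := ⟨⟨1, le_rfl⟩⟩
  have hcross : ∀ j n : ℕ, 1 ≤ j → 1 ≤ n → m j / j ≤ M n / n := fun j n hj hn =>
    superadditive_div_le_subadditive_div hsub hsup hle hj hn
  set ℓ := ⨅ n : {n : ℕ // 1 ≤ n}, M n / n
  have hbdd : BddBelow (Set.range fun n : {n : ℕ // 1 ≤ n} => M n / n) :=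
    ⟨m 1 / (1 : ℕ), by rintro _ ⟨⟨n, hn⟩, rfl⟩; exact hcross 1 n le_rfl hn⟩
  have hMℓ (n : ℕ) (hn : 1 ≤ n) : n * ℓ ≤ M n :=
    (le_div_iff₀' (by positivity)).1 (ciInf_le hbdd ⟨n, hn⟩)
  have hmℓ (n : ℕ) (hn : 1 ≤ n) : m n ≤ n * ℓ :=
    (div_le_iff₀' (by positivity)).1 (le_ciInf fun k => hcross n k hn k.2)
  have habsM (n : ℕ) (hn : 1 ≤ n) : |M n - n * ℓ| ≤ C := by
    rw [abs_sub_le_iff]; constructor <;> linarith [hmℓ n hn, hMℓ n hn, hgap n hn]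
  have habsm (n : ℕ) (hn : 1 ≤ n) : |m n - n * ℓ| ≤ C := by
    rw [abs_sub_le_iff]; constructor <;> linarith [hmℓ n hn, hMℓ n hn, hgap n hn]
  have hmlim := tendsto_div_of_abs_sub_mul_le habsm
  refine ⟨ℓ, tendsto_div_of_abs_sub_mul_le habsM, hmlim, rfl, ?_, habsM, habsm⟩
  exact eq_ciSup_of_tendsto_of_le hmlim fun n hn =>
    (div_le_iff₀ (by positivity)).2 (by linarith [hmℓ n hn])

/-- If `(M_n)` is subadditive, `(m_n)` is superadditive, `m_n ≤ M_n`, and `M_n − m_n ≤ C`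
for all `n ≥ 1`, then `M_n/n → inf_n M_n/n`, `m_n/n → sup_n m_n/n`, both limits equal a
common value `ℓ`, and `|M_n − nℓ| ≤ C`, `|m_n − nℓ| ≤ C` for all `n ≥ 1`. -/
theorem subadd_superadd_common_limit
    (M m : ℕ → ℝ) (C : ℝ) (hC : 0 ≤ C)
    (hsub : ∀ n k : ℕ, 1 ≤ n → 1 ≤ k → M (n + k) ≤ M n + M k)
    (hsup : ∀ n k : ℕ, 1 ≤ n → 1 ≤ k → m n + m k ≤ m (n + k))
    (hle : ∀ n : ℕ, 1 ≤ n → m n ≤ M n)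
    (hgap : ∀ n : ℕ, 1 ≤ n → M n - m n ≤ C) :
    ∃ ℓ : ℝ,
      Tendsto (fun n : ℕ => M n / n) atTop (𝓝 ℓ) ∧
      Tendsto (fun n : ℕ => m n / n) atTop (𝓝 ℓ) ∧
      ℓ = ⨅ n : {n : ℕ // 1 ≤ n}, M n / n ∧
      ℓ = ⨆ n : {n : ℕ // 1 ≤ n}, m n / n ∧
      (∀ n : ℕ, 1 ≤ n → |M n - n * ℓ| ≤ C) ∧
      (∀ n : ℕ, 1 ≤ n → |m n - n * ℓ| ≤ C) :=
  subadd_superadd_common_limit_general M m C hsub hsup hle hgap
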